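/- Suppose the state digraph D(Ā) is irreducible (strongly connected, so q = 1) and the state bipartite graph B(Ā) has a perfect matching. Then for any nonempty set of inputs, picking the single input j* minimizing p_u(j) among inputs with at least one edge into a state yields an optimal solution to the minimum cost constrained input selection problem: (Ā, B̄_{{j*}}) is structurally controllable and p({j*}) ≤ p(W) for every W with (Ā,B̄_W) structurally controllable. -/

import Mathlib

open scoped Classical

/-- Edge relation of the system digraph `D(Ā, B̄_W)` restricted to the inputs in
`W`: edge `x_j → x_i` iff `Ā i j ≠ 0`, and `u_j → x_i` iff `B̄ i j ≠ 0` and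
`j ∈ W`. -/
def sysEW {n m : ℕ} (A : Fin n → Fin n → Bool) (B : Fin n → Fin m → Bool)
    (W : Finset (Fin m)) : Fin n ⊕ Fin m → Fin n ⊕ Fin m → Prop
  | Sum.inl j, Sum.inl i => A i j = true
  | Sum.inr j, Sum.inl i => B i j = true ∧ j ∈ W
  | _, _ => False

/-- Edge relation of the bipartite graph `B(Ā, B̄_W)`: left vertex `x_r`
(`inl r`) or `u_j` (`inr j`, with `j ∈ W`) adjacent to right vertex `x'_k`. -/
def bipEW {n m : ℕ} (A : Fin n → Fin n → Bool) (B : Fin n → Fin m → Bool)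
    (W : Finset (Fin m)) : Fin n ⊕ Fin m → Fin n → Prop
  | Sum.inl r, k => A k r = true
  | Sum.inr j, k => B k j = true ∧ j ∈ W

/-- Structural controllability of the restricted system `(Ā, B̄_W)`: every state
is reachable from some input in `W`, and `B(Ā,B̄_W)` has a matching saturating
the right vertices `x'₁,…,x'ₙ`. -/
def SCsel {n m : ℕ} (A : Fin n → Fin n → Bool) (B : Fin n → Fin m → Bool)
    (W : Finset (Fin m)) : Prop :=
  (∀ i : Fin n, ∃ j ∈ W,
      Relation.ReflTransGen (sysEW A B W) (Sum.inr j) (Sum.inl i)) ∧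
    ∃ M : Fin n → Fin n ⊕ Fin m, Function.Injective M ∧ ∀ k : Fin n, bipEW A B W (M k) k

/-!
Irreducibility of `D(Ā)` lets any input with an edge into some state reach every state, and a
perfect matching of `B(Ā)` already saturates `x'₁,…,x'ₙ` without input columns, so `{j*}` is
structurally controllable. Conversely, a structurally controllable `W` must reach a state, so it
contains an input with an edge into a state; its cost is at least `p j*`, and the other costs
are nonnegative.
-/

section InputSelection

variable {n m : ℕ} {A : Fin n → Fin n → Bool} {B : Fin n → Fin m → Bool} {W : Finset (Fin m)}

theorem sysEW_reflTransGen_inl {i k : Fin n}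
    (h : Relation.ReflTransGen (fun a b : Fin n => A b a = true) i k) :
    Relation.ReflTransGen (sysEW A B W) (Sum.inl i) (Sum.inl k) :=
  h.lift Sum.inl fun _ _ hab => hab

theorem sysEW_reflTransGen_of_irreducible
    (hirr : ∀ i k : Fin n, Relation.ReflTransGen (fun a b : Fin n => A b a = true) i k)
    {j : Fin m} (hjW : j ∈ W) {r : Fin n} (hr : B r j = true) (i : Fin n) :
    Relation.ReflTransGen (sysEW A B W) (Sum.inr j) (Sum.inl i) :=
  Relation.ReflTransGen.head (show sysEW A B W (Sum.inr j) (Sum.inl r) from ⟨hr, hjW⟩)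
    (sysEW_reflTransGen_inl (hirr r i))

theorem exists_bipEW_matching_of_state_matching
    (hpm : ∃ M : Fin n → Fin n, Function.Injective M ∧ ∀ k : Fin n, A k (M k) = true) :
    ∃ M : Fin n → Fin n ⊕ Fin m, Function.Injective M ∧ ∀ k : Fin n, bipEW A B W (M k) k := by
  obtain ⟨M, hMinj, hM⟩ := hpm
  exact ⟨Sum.inl ∘ M, Sum.inl_injective.comp hMinj, hM⟩

theorem SCsel_singleton_of_irreducible
    (hirr : ∀ i k : Fin n, Relation.ReflTransGen (fun a b : Fin n => A b a = true) i k)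
    (hpm : ∃ M : Fin n → Fin n, Function.Injective M ∧ ∀ k : Fin n, A k (M k) = true)
    {j : Fin m} {r : Fin n} (hr : B r j = true) :
    SCsel A B {j} :=
  ⟨fun i => ⟨j, Finset.mem_singleton_self j,
      sysEW_reflTransGen_of_irreducible hirr (Finset.mem_singleton_self j) hr i⟩,
    exists_bipEW_matching_of_state_matching hpm⟩

theorem exists_input_edge_of_sysEW_reflTransGen {j : Fin m} {i : Fin n}
    (h : Relation.ReflTransGen (sysEW A B W) (Sum.inr j) (Sum.inl i)) :
    ∃ r : Fin n, B r j = true := by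
  rcases h.cases_head with hji | ⟨c, hjc, -⟩
  · exact absurd hji Sum.inr_ne_inl
  · cases c with
    | inl r => exact ⟨r, hjc.1⟩
    | inr _ => exact hjc.elim

theorem SCsel.exists_mem_input_edge (hn : 0 < n) (hW : SCsel A B W) :
    ∃ j ∈ W, ∃ r : Fin n, B r j = true := by
  obtain ⟨j, hjW, hreach⟩ := hW.1 ⟨0, hn⟩
  exact ⟨j, hjW, exists_input_edge_of_sysEW_reflTransGen hreach⟩

end InputSelection

/-- Corollary 3. Suppose the state digraph `D(Ā)` is
irreducible (every state reaches every state) and the state bipartite graph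
`B(Ā)` has a perfect matching. Then picking the single input `jstar`
minimizing the nonnegative cost `p` among the inputs having at least one edge
into a state yields an optimal solution of the minimum cost constrained input
selection problem: `(Ā, B̄_{{jstar}})` is structurally controllable, and
`p({jstar}) ≤ p(W)` for every `W` with `(Ā, B̄_W)` structurally controllable. -/
theorem stmt19 {n m : ℕ} (hn : 0 < n)
    (A : Fin n → Fin n → Bool) (B : Fin n → Fin m → Bool)
    (p : Fin m → ℝ) (hp : ∀ j : Fin m, 0 ≤ p j)
    (hirr : ∀ i k : Fin n,
      Relation.ReflTransGen (fun a b : Fin n => A b a = true) i k)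
    (hpm : ∃ M : Fin n → Fin n, Function.Injective M ∧ ∀ k : Fin n, A k (M k) = true)
    (jstar : Fin m) (hjstar : ∃ r : Fin n, B r jstar = true)
    (hmin : ∀ j : Fin m, (∃ r : Fin n, B r j = true) → p jstar ≤ p j) :
    SCsel A B {jstar} ∧
      ∀ W : Finset (Fin m), SCsel A B W → p jstar ≤ ∑ j ∈ W, p j := by
  obtain ⟨r, hr⟩ := hjstar
  refine ⟨SCsel_singleton_of_irreducible hirr hpm hr, fun W hW => ?_⟩
  obtain ⟨j, hjW, hj⟩ := hW.exists_mem_input_edge hn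
  calc p jstar ≤ p j := hmin j hj
    _ ≤ ∑ j ∈ W, p j := Finset.single_le_sum (fun i _ => hp i) hjW
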